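/- Let μ be an eigenvalue of a signed graph Σ with star set S such that for all u ∈ S, ⟨b_u, b_u⟩ = μ and for all distinct u,v ∈ S, ⟨b_u, b_v⟩ ∈ {0,1,−1}, where ⟨x,y⟩ = xᵀ(μI−C)⁻¹y and C is the adjacency matrix of a signed graph Σ' not having μ as an eigenvalue. Then the matrix [[A_S, Bᵀ],[B, C]] with (A_S)_{uv} = −⟨b_u,b_v⟩ for u≠v and zero diagonal is the adjacency matrix of a signed graph having Σ' as a star complement for μ, i.e., μ is an eigenvalue of this matrix with multiplicity |S|. -/

import Mathlib

/-!
The eigenvectors of `A = [[A_S, Bᵀ], [B, C]]` for `μ` are the vectors `(x, y)` with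
`(μI - C) y = B x` and `(μI - A_S - Bᵀ (μI - C)⁻¹ B) x = 0`. The hypotheses on the `b_u` say
exactly that `A_S + Bᵀ (μI - C)⁻¹ B = μI`, so the Schur complement vanishes and
`x ↦ (x, (μI - C)⁻¹ B x)` is an isomorphism from `ℝ^S` onto the eigenspace.
-/

open Matrix

/-- The bilinear form `⟨x, y⟩ = xᵀ (μI - C)⁻¹ y` associated with a star complement. -/
noncomputable def starBilin {t : ℕ} (μ : ℝ) (C : Matrix (Fin t) (Fin t) ℝ) (x y : Fin t → ℝ) : ℝ :=
  x ⬝ᵥ ((μ • (1 : Matrix (Fin t) (Fin t) ℝ) - C)⁻¹).mulVec y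

open Module

namespace Matrix

theorem fromBlocks_apply_mem {l m α : Type*} {S : Set α} {A : Matrix l l α} {B : Matrix l m α}
    {C : Matrix m l α} {D : Matrix m m α} (hA : ∀ i j, A i j ∈ S) (hB : ∀ i j, B i j ∈ S)
    (hC : ∀ i j, C i j ∈ S) (hD : ∀ i j, D i j ∈ S) (p q : l ⊕ m) :
    fromBlocks A B C D p q ∈ S := by
  rcases p with i | i <;> rcases q with j | j
  exacts [hA i j, hB i j, hC i j, hD i j]

theorem mul_mul_apply_eq_dotProduct_mulVec {l m n α : Type*} [Fintype m] [Fintype n]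
    [CommSemiring α] (A : Matrix l m α) (N : Matrix m n α) (B : Matrix n l α) (u v : l) :
    (A * N * B) u v = A u ⬝ᵥ N *ᵥ Bᵀ v := by
  rw [Matrix.mul_assoc]
  simp [mul_apply, dotProduct, mulVec]

section Eigenspace

variable {m n K : Type*} [Fintype m] [Fintype n] [Field K]
  {P : Matrix m m K} {Q : Matrix m n K} {R : Matrix n m K} {C : Matrix n n K} {μ : K}

theorem fromBlocks_mulVec_eq_smul_iff (v : m ⊕ n → K) :
    fromBlocks P Q R C *ᵥ v = μ • v ↔
      P *ᵥ (v ∘ Sum.inl) + Q *ᵥ (v ∘ Sum.inr) = μ • (v ∘ Sum.inl) ∧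
        R *ᵥ (v ∘ Sum.inl) + C *ᵥ (v ∘ Sum.inr) = μ • (v ∘ Sum.inr) := by
  rw [fromBlocks_mulVec, ← Sum.elim_comp_inl_inr (μ • v), Sum.elim_eq_iff]
  rfl

variable [DecidableEq n]

theorem isUnit_det_smul_one_sub (hC : ¬ ∃ v : n → K, v ≠ 0 ∧ C *ᵥ v = μ • v) :
    IsUnit (μ • 1 - C).det := by
  rw [isUnit_iff_ne_zero]
  intro h
  obtain ⟨v, hv, hv0⟩ := exists_mulVec_eq_zero_iff.mpr h
  rw [sub_mulVec, smul_mulVec, one_mulVec, sub_eq_zero] at hv0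
  exact hC ⟨v, hv, hv0.symm⟩

theorem add_mulVec_eq_smul_iff (hM : IsUnit (μ • 1 - C).det) (x : m → K) (y : n → K) :
    R *ᵥ x + C *ᵥ y = μ • y ↔ y = ((μ • 1 - C)⁻¹ * R) *ᵥ x := by
  have : Invertible (μ • 1 - C) := invertibleOfIsUnitDet _ hM
  rw [← mulVec_mulVec]
  constructor
  · intro h
    refine (inv_mulVec_eq_vec ?_).symm
    rw [sub_mulVec, smul_mulVec, one_mulVec, ← h, add_sub_cancel_right]
  · rintro rfl
    set y := (μ • 1 - C)⁻¹ *ᵥ R *ᵥ x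
    have hRx : R *ᵥ x = (μ • 1 - C) *ᵥ y := by
      rw [mulVec_mulVec, mul_inv_of_invertible, one_mulVec]
    rw [hRx, sub_mulVec, smul_mulVec, one_mulVec, sub_add_cancel]

variable [DecidableEq m]

theorem fromBlocks_mulVec_eq_smul_iff_of_schur (hM : IsUnit (μ • 1 - C).det)
    (hschur : P + Q * (μ • 1 - C)⁻¹ * R = μ • 1) (v : m ⊕ n → K) :
    fromBlocks P Q R C *ᵥ v = μ • v ↔ v ∘ Sum.inr = ((μ • 1 - C)⁻¹ * R) *ᵥ (v ∘ Sum.inl) := by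
  rw [fromBlocks_mulVec_eq_smul_iff, add_mulVec_eq_smul_iff hM, and_iff_right_iff_imp]
  intro hv
  rw [hv, mulVec_mulVec, ← add_mulVec, ← Matrix.mul_assoc, hschur, smul_mulVec, one_mulVec]

theorem eigenspace_toLin'_fromBlocks (hM : IsUnit (μ • 1 - C).det)
    (hschur : P + Q * (μ • 1 - C)⁻¹ * R = μ • 1) :
    End.eigenspace (toLin' (fromBlocks P Q R C)) μ =
      LinearMap.range (toLin' (fromRows 1 ((μ • 1 - C)⁻¹ * R))) := by
  ext v
  rw [End.mem_eigenspace_iff, toLin'_apply, fromBlocks_mulVec_eq_smul_iff_of_schur hM hschur,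
    LinearMap.mem_range]
  constructor
  · intro hv
    refine ⟨v ∘ Sum.inl, ?_⟩
    rw [toLin'_apply, fromRows_mulVec, one_mulVec, ← hv, Sum.elim_comp_inl_inr]
  · rintro ⟨x, rfl⟩
    rw [toLin'_apply, fromRows_mulVec, one_mulVec]
    rfl

theorem finrank_eigenspace_toLin'_fromBlocks (hM : IsUnit (μ • 1 - C).det)
    (hschur : P + Q * (μ • 1 - C)⁻¹ * R = μ • 1) :
    finrank K (End.eigenspace (toLin' (fromBlocks P Q R C)) μ) = Fintype.card m := by
  rw [eigenspace_toLin'_fromBlocks hM hschur, LinearMap.finrank_range_of_inj,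
    finrank_fintype_fun_eq_card]
  intro x y h
  simpa [fromRows_mulVec] using congrArg (· ∘ Sum.inl) h

end Eigenspace

end Matrix

theorem neg_mem_zero_one_neg_one {α : Type*} [Ring α] {x : α} (hx : x ∈ ({0, 1, -1} : Set α)) :
    -x ∈ ({0, 1, -1} : Set α) := by
  rcases hx with rfl | rfl | rfl <;> simp

theorem starBilin_comm {t : ℕ} {μ : ℝ} {C : Matrix (Fin t) (Fin t) ℝ} (hC : C.IsSymm)
    (x y : Fin t → ℝ) : starBilin μ C x y = starBilin μ C y x := by
  have hN : ((μ • 1 - C)⁻¹).IsSymm := ((isSymm_one.smul μ).sub hC).inv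
  rw [starBilin, starBilin, dotProduct_mulVec, ← mulVec_transpose, hN.eq, dotProduct_comm]

theorem of_mul_inv_mul_transpose_apply {k t : ℕ} (μ : ℝ) (C : Matrix (Fin t) (Fin t) ℝ)
    (b : Fin k → Fin t → ℝ) (u v : Fin k) :
    (of b * (μ • 1 - C)⁻¹ * (of b)ᵀ) u v = starBilin μ C (b u) (b v) := by
  rw [mul_mul_apply_eq_dotProduct_mulVec, transpose_transpose]
  rfl

theorem star_complement_construction {k t : ℕ}
    (C : Matrix (Fin t) (Fin t) ℝ)
    (hCsymm : C.IsSymm)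
    (hCentries : ∀ i j, C i j ∈ ({0, 1, -1} : Set ℝ))
    (hCdiag : ∀ i, C i i = 0)
    (μ : ℝ)
    (hC : ¬ ∃ v : Fin t → ℝ, v ≠ 0 ∧ C.mulVec v = μ • v)
    (b : Fin k → (Fin t → ℝ))
    (hbentries : ∀ u i, b u i ∈ ({0, 1, -1} : Set ℝ))
    (hbu : ∀ u, starBilin μ C (b u) (b u) = μ)
    (hbuv : ∀ u v, u ≠ v → starBilin μ C (b u) (b v) ∈ ({0, 1, -1} : Set ℝ))
    (AS : Matrix (Fin k) (Fin k) ℝ)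
    (hAS : ∀ u v, AS u v = if u = v then 0 else - starBilin μ C (b u) (b v))
    (B : Matrix (Fin t) (Fin k) ℝ) (hB : ∀ i u, B i u = b u i)
    (A : Matrix (Fin k ⊕ Fin t) (Fin k ⊕ Fin t) ℝ)
    (hA : A = Matrix.fromBlocks AS Bᵀ B C) :
    A.IsSymm ∧
    (∀ p q, A p q ∈ ({0, 1, -1} : Set ℝ)) ∧
    (∀ p, A p p = 0) ∧
    Module.finrank ℝ (Module.End.eigenspace (Matrix.toLin' A) μ) = k := by
  obtain rfl : B = (of b)ᵀ := by
    ext i u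
    exact hB i u
  have hschur : AS + of b * (μ • 1 - C)⁻¹ * (of b)ᵀ = μ • 1 := by
    ext u v
    rw [Matrix.add_apply, hAS, of_mul_inv_mul_transpose_apply, Matrix.smul_apply, one_apply]
    split_ifs with h
    · rw [h, hbu, zero_add, smul_eq_mul, mul_one]
    · rw [neg_add_cancel, smul_zero]
  have hASsymm : AS.IsSymm := IsSymm.ext fun u v => by
    rw [hAS, hAS, starBilin_comm hCsymm]
    simp only [@eq_comm _ v u]
  have hASentries : ∀ u v, AS u v ∈ ({0, 1, -1} : Set ℝ) := fun u v => by
    rw [hAS]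
    split_ifs with h
    · exact Or.inl rfl
    · exact neg_mem_zero_one_neg_one (hbuv u v h)
  subst hA
  refine ⟨hASsymm.fromBlocks (transpose_transpose _) hCsymm,
    fromBlocks_apply_mem hASentries hbentries (fun i u => hbentries u i) hCentries, ?_, ?_⟩
  · rintro (u | i)
    · simp [hAS]
    · exact hCdiag i
  · exact (finrank_eigenspace_toLin'_fromBlocks (isUnit_det_smul_one_sub hC) hschur).trans
      (Fintype.card_fin k)
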